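/- arXiv:math/0401052 — 3 statements merged into one kernel-verified Lean document; each statement's English description precedes it below -/
import Mathlib

section
/- Every Z ∈ GL_m(ℂ[t^{±1},q^{±1}]) factors as Z = Z₀Z₁ with Z₀ ∈ GL_m(ℂ) (the evaluation of Z at t = α, q = β) and Z₁ ∈ L(α,β), and the conjugation action of Z on L(α,β)/L²(α,β) ≅ 𝔰𝔩_m(ℂ) × 𝔰𝔩_m(ℂ) is the diagonal action (v,w) ↦ (Z₀ v Z₀⁻¹, Z₀ w Z₀⁻¹). -/
/-! Take `Z₀` to be the value of `Z` at `(t, q) = (α, β)`. Every Laurent polynomial is congruent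
to its value modulo `J`, so `Z ≡ Z₀` and `Z⁻¹ ≡ Z₀⁻¹` modulo `J`, which gives the factorisation.
If `A ≡ 1 + F` modulo `J²` with `F ≡ 0` modulo `J`, then
`Z A Z⁻¹ - 1 - Z₀ F Z₀⁻¹ = Z (A - 1 - F) Z⁻¹ + (Z - Z₀) F Z⁻¹ + Z₀ F (Z⁻¹ - Z₀⁻¹)`,
and each summand lies in `J²`. -/

open Matrix LaurentPolynomial

/-- The two-variable Laurent polynomial ring `ℂ[t^{±1}, q^{±1}]`. -/
abbrev LaurentTwo : Type := LaurentPolynomial (LaurentPolynomial ℂ)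

/-- The variable `t` in `ℂ[t^{±1}, q^{±1}]`. -/
noncomputable def tVar : LaurentTwo := LaurentPolynomial.C (LaurentPolynomial.T 1)

/-- The variable `q` in `ℂ[t^{±1}, q^{±1}]`. -/
noncomputable def qVar : LaurentTwo := LaurentPolynomial.T 1

/-- The inclusion of constants `ℂ → ℂ[t^{±1}, q^{±1}]`. -/
noncomputable def constC : ℂ →+* LaurentTwo :=
  LaurentPolynomial.C.comp LaurentPolynomial.C

namespace LaurentPolynomial

theorem ringHom_ext {R S : Type*} [CommSemiring R] [Semiring S] {f g : R[T;T⁻¹] →+* S}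
    (hC : f.comp C = g.comp C) (hT : f (T 1) = g (T 1)) : f = g := by
  refine IsLocalization.ringHom_ext (Submonoid.powers (Polynomial.X : Polynomial R)) ?_
  refine Polynomial.ringHom_ext (fun a => ?_) ?_
  · simpa [algebraMap_eq_toLaurent] using RingHom.congr_fun hC a
  · simpa [algebraMap_eq_toLaurent] using hT

end LaurentPolynomial

namespace Ideal

variable {R : Type*} [CommRing R] {n : Type*} [Fintype n] [DecidableEq n]

theorem mul_mem_matrix_mul {I I' : Ideal R} {M N : Matrix n n R} (hM : M ∈ I.matrix n)
    (hN : N ∈ I'.matrix n) : M * N ∈ (I * I').matrix n := fun i j =>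
  sum_mem _ fun k _ => mul_mem_mul (hM i k) (hN k j)

theorem mul_mem_matrix_right {I : Ideal R} {M : Matrix n n R} (N : Matrix n n R)
    (hM : M ∈ I.matrix n) : M * N ∈ I.matrix n := by
  simpa using mul_mem_matrix_mul hM (I' := ⊤) fun _ _ => Submodule.mem_top

theorem smul_mem_matrix {I : Ideal R} {c : R} (hc : c ∈ I) (M : Matrix n n R) :
    c • M ∈ I.matrix n := fun _ _ => mul_mem_right _ _ hc

theorem conj_sub_conj_mem_matrix_sq {I : Ideal R} {Z Z' W W' F : Matrix n n R}
    (hZ : Z - W ∈ I.matrix n) (hZ' : Z' - W' ∈ I.matrix n) (hF : F ∈ I.matrix n) :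
    Z * F * Z' - W * F * W' ∈ (I ^ 2).matrix n := by
  have h : Z * F * Z' - W * F * W' = (Z - W) * F * Z' + W * (F * (Z' - W')) := by noncomm_ring
  rw [h, sq]
  exact add_mem (mul_mem_matrix_right _ (mul_mem_matrix_mul hZ hF))
    (mul_mem_left _ _ (mul_mem_matrix_mul hF hZ'))

end Ideal

namespace Matrix

variable {R S : Type*} [CommRing R] [CommRing S] {n : Type*} [Fintype n] [DecidableEq n]

theorem map_nonsing_inv (f : R →+* S) {Z : Matrix n n R} (hZ : IsUnit Z) :
    Z⁻¹.map f = (Z.map f)⁻¹ := by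
  refine (inv_eq_right_inv ?_).symm
  rw [← Matrix.map_mul, mul_nonsing_inv _ ((isUnit_iff_isUnit_det Z).mp hZ),
    Matrix.map_one _ f.map_zero f.map_one]

end Matrix

section Retraction

variable {R S : Type*} [CommRing R] [CommRing S] {n : Type*} [Fintype n] [DecidableEq n]
  {J : Ideal R} {ev : R →+* S} {ι : S →+* R}

theorem sub_map_map_mem_matrix (hev : ∀ f, f - ι (ev f) ∈ J) (M : Matrix n n R) :
    M - (M.map ev).map ι ∈ J.matrix n := fun i j => hev (M i j)

theorem inv_map_map_mul_sub_one_mem_matrix (hev : ∀ f, f - ι (ev f) ∈ J) {Z : Matrix n n R}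
    (hZ : IsUnit Z) : ((Z.map ev).map ι)⁻¹ * Z - 1 ∈ J.matrix n := by
  have hW : IsUnit ((Z.map ev).map ι) := (hZ.map ev.mapMatrix).map ι.mapMatrix
  have h : ((Z.map ev).map ι)⁻¹ * Z - 1 = ((Z.map ev).map ι)⁻¹ * (Z - (Z.map ev).map ι) := by
    rw [mul_sub, nonsing_inv_mul _ ((isUnit_iff_isUnit_det _).mp hW)]
  rw [h]
  exact J.matrix n |>.mul_mem_left _ (sub_map_map_mem_matrix hev Z)

theorem conj_sub_one_sub_conj_map_map_mem_matrix_sq (hev : ∀ f, f - ι (ev f) ∈ J)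
    {Z A F : Matrix n n R} (hZ : IsUnit Z) (hF : F ∈ J.matrix n)
    (hA : A - 1 - F ∈ (J ^ 2).matrix n) :
    Z * A * Z⁻¹ - 1 - (Z.map ev).map ι * F * ((Z.map ev).map ι)⁻¹ ∈ (J ^ 2).matrix n := by
  have hZ₀ : IsUnit (Z.map ev) := hZ.map ev.mapMatrix
  have hZinv : ((Z.map ev).map ι)⁻¹ = (Z⁻¹.map ev).map ι := by
    rw [map_nonsing_inv ev hZ, map_nonsing_inv ι hZ₀]
  have h : Z * A * Z⁻¹ - 1 - (Z.map ev).map ι * F * ((Z.map ev).map ι)⁻¹ =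
      Z * ((A - 1 - F) * Z⁻¹) + (Z * F * Z⁻¹ - (Z.map ev).map ι * F * (Z⁻¹.map ev).map ι) := by
    rw [hZinv]
    conv_lhs => rw [← mul_nonsing_inv Z ((isUnit_iff_isUnit_det Z).mp hZ)]
    noncomm_ring
  rw [h]
  exact add_mem ((J ^ 2).matrix n |>.mul_mem_left _ (Ideal.mul_mem_matrix_right _ hA))
    (Ideal.conj_sub_conj_mem_matrix_sq (sub_map_map_mem_matrix hev Z)
      (sub_map_map_mem_matrix hev Z⁻¹) hF)

end Retraction

/-- Evaluation at `t = α`, `q = β`; `t` is the inner variable of `LaurentTwo`. -/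
noncomputable def evalTwo (α β : ℂˣ) : LaurentTwo →+* ℂ :=
  eval₂ (eval₂ (RingHom.id ℂ) α) β

theorem sub_constC_evalTwo_mem (α β : ℂˣ) (f : LaurentTwo) :
    f - constC (evalTwo α β f) ∈ Ideal.span {tVar - constC α, qVar - constC β} := by
  set J := Ideal.span {tVar - constC α, qVar - constC β}
  have ht : Ideal.Quotient.mk J tVar = Ideal.Quotient.mk J (constC α) :=
    Ideal.Quotient.mk_eq_mk_iff_sub_mem _ _ |>.2 (Ideal.subset_span (by simp))
  have hq : Ideal.Quotient.mk J qVar = Ideal.Quotient.mk J (constC β) :=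
    Ideal.Quotient.mk_eq_mk_iff_sub_mem _ _ |>.2 (Ideal.subset_span (by simp))
  suffices h : Ideal.Quotient.mk J = (Ideal.Quotient.mk J).comp (constC.comp (evalTwo α β)) from
    Ideal.Quotient.mk_eq_mk_iff_sub_mem _ _ |>.1 (RingHom.congr_fun h f)
  refine LaurentPolynomial.ringHom_ext (LaurentPolynomial.ringHom_ext ?_ ?_) ?_
  · exact RingHom.ext fun c => by simp [constC, evalTwo]
  · simpa [tVar, constC, evalTwo] using ht
  · simpa [qVar, constC, evalTwo] using hq

theorem lkb_conjugation_diagonal_general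
    (m : ℕ) (α β : ℂ) (hα : α ≠ 0) (hβ : β ≠ 0)
    (J : Ideal LaurentTwo)
    (hJ : J = Ideal.span {tVar - constC α, qVar - constC β})
    (Z : Matrix (Fin m) (Fin m) LaurentTwo) (hZ : IsUnit Z) :
    ∃ (Z₀ : Matrix (Fin m) (Fin m) ℂ) (Z₁ : Matrix (Fin m) (Fin m) LaurentTwo),
      IsUnit Z₀ ∧
      (∀ k l, (Z₁ - 1) k l ∈ J) ∧
      Z = Z₀.map constC * Z₁ ∧
      ∀ (A : Matrix.SpecialLinearGroup (Fin m) LaurentTwo)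
        (At Aq : Matrix (Fin m) (Fin m) ℂ),
        (∀ k l,
          (((A : Matrix.SpecialLinearGroup (Fin m) LaurentTwo) :
              Matrix (Fin m) (Fin m) LaurentTwo) - 1
            - (tVar - constC α) • At.map constC
            - (qVar - constC β) • Aq.map constC :
              Matrix (Fin m) (Fin m) LaurentTwo) k l ∈ J ^ 2) →
        (∀ k l,
          (Z * (A : Matrix (Fin m) (Fin m) LaurentTwo) * Z⁻¹ - 1
            - (tVar - constC α) • (Z₀ * At * Z₀⁻¹).map constC
            - (qVar - constC β) • (Z₀ * Aq * Z₀⁻¹).map constC :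
              Matrix (Fin m) (Fin m) LaurentTwo) k l ∈ J ^ 2) := by
  set ev := evalTwo (Units.mk0 α hα) (Units.mk0 β hβ)
  have hev : ∀ f : LaurentTwo, f - constC (ev f) ∈ J := by
    rw [hJ]; exact sub_constC_evalTwo_mem (Units.mk0 α hα) (Units.mk0 β hβ)
  set Z₀ := Z.map ev
  have hZ₀ : IsUnit Z₀ := hZ.map ev.mapMatrix
  set W := Z₀.map constC
  have hW : IsUnit W.det := (isUnit_iff_isUnit_det W).mp (hZ₀.map constC.mapMatrix)
  refine ⟨Z₀, W⁻¹ * Z, hZ₀, inv_map_map_mul_sub_one_mem_matrix hev hZ,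
    (mul_nonsing_inv_cancel_left _ _ hW).symm, fun A At Aq hA => ?_⟩
  set F := (tVar - constC α) • At.map constC + (qVar - constC β) • Aq.map constC
  have hF : F ∈ J.matrix (Fin m) := by
    refine add_mem (Ideal.smul_mem_matrix ?_ _) (Ideal.smul_mem_matrix ?_ _) <;>
      exact hJ ▸ Ideal.subset_span (by simp)
  have hA' : (A : Matrix (Fin m) (Fin m) LaurentTwo) - 1 - F ∈ (J ^ 2).matrix (Fin m) := by
    simpa only [F, sub_sub, add_assoc, Ideal.mem_matrix] using hA
  have hWFW : W * F * W⁻¹ = (tVar - constC α) • (Z₀ * At * Z₀⁻¹).map constC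
      + (qVar - constC β) • (Z₀ * Aq * Z₀⁻¹).map constC := by
    simp only [F, W, mul_add, add_mul, Matrix.mul_smul, Matrix.smul_mul, Matrix.map_mul,
      map_nonsing_inv constC hZ₀]
  have hconj := conj_sub_one_sub_conj_map_map_mem_matrix_sq hev hZ hF hA'
  rwa [hWFW, ← sub_sub] at hconj

/-- Every `Z ∈ GL_m(ℂ[t^{±1},q^{±1}])` factors as `Z = Z₀ Z₁` with
`Z₀ ∈ GL_m(ℂ)` and `Z₁ ≡ I mod (t-α, q-β)`, and the conjugation action of `Z` on
`L(α,β)/L²(α,β) ≅ 𝔰𝔩_m(ℂ) × 𝔰𝔩_m(ℂ)` is the diagonal action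
`(A_t, A_q) ↦ (Z₀ A_t Z₀⁻¹, Z₀ A_q Z₀⁻¹)`. -/
theorem lkb_conjugation_diagonal
    (m : ℕ) (hm : 1 ≤ m) (α β : ℂ) (hα : α ≠ 0) (hβ : β ≠ 0)
    (J : Ideal LaurentTwo)
    (hJ : J = Ideal.span {tVar - constC α, qVar - constC β})
    (Z : Matrix (Fin m) (Fin m) LaurentTwo) (hZ : IsUnit Z) :
    ∃ (Z₀ : Matrix (Fin m) (Fin m) ℂ) (Z₁ : Matrix (Fin m) (Fin m) LaurentTwo),
      IsUnit Z₀ ∧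
      (∀ k l, (Z₁ - 1) k l ∈ J) ∧
      Z = Z₀.map constC * Z₁ ∧
      ∀ (A : Matrix.SpecialLinearGroup (Fin m) LaurentTwo)
        (At Aq : Matrix (Fin m) (Fin m) ℂ),
        (∀ k l,
          (((A : Matrix.SpecialLinearGroup (Fin m) LaurentTwo) :
              Matrix (Fin m) (Fin m) LaurentTwo) - 1
            - (tVar - constC α) • At.map constC
            - (qVar - constC β) • Aq.map constC :
              Matrix (Fin m) (Fin m) LaurentTwo) k l ∈ J ^ 2) →
        (∀ k l,
          (Z * (A : Matrix (Fin m) (Fin m) LaurentTwo) * Z⁻¹ - 1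
            - (tVar - constC α) • (Z₀ * At * Z₀⁻¹).map constC
            - (qVar - constC β) • (Z₀ * Aq * Z₀⁻¹).map constC :
              Matrix (Fin m) (Fin m) LaurentTwo) k l ∈ J ^ 2) :=
  lkb_conjugation_diagonal_general m α β hα hβ J hJ Z hZ
end

section
/- Let B₄ act via the reduced Burau representation β₄: B₄ → GL₃(ℤ[t,t⁻¹]), with σ₁ ↦ [[-t,1,0],[0,1,0],[0,0,1]], σ₂ ↦ [[1,0,0],[t,-t,1],[0,0,1]], σ₃ ↦ [[1,0,0],[0,1,0],[0,t,-t]]. Let ρ₄(α) be the induced action on 𝔰𝔩₃(ℂ) by conjugation after evaluating t = α. Then the characteristic polynomial of each of X(α) = ρ₄(α)(σ₃σ₁⁻¹), X(α)⁻¹, Y(α) = ρ₄(α)(σ₂σ₃σ₁⁻¹σ₂⁻¹), and Y(α)⁻¹ on the 8-dimensional space 𝔰𝔩₃(ℂ) equals (t-1)²(t - 1/α²)(t - α²)(t + α)²(t + 1/α)². -/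
/-!
Conjugation `M ↦ Ad M` is multiplicative, so the characteristic polynomial of `Ad M` on `𝔰𝔩₃`
only depends on the conjugacy class of `M`. The transposition `(1 2)` conjugates
`X = σ₃σ₁⁻¹` to an upper triangular `U` with diagonal `(-α⁻¹, -α, 1)`; moreover `Y = b₂ X b₂⁻¹`,
and `X⁻¹` is conjugate to the upper triangular `U⁻¹`. For upper triangular `U`, in the basis of
`𝔰𝔩₃` formed by the root vectors ordered from the highest root down with the two diagonal
vectors in the middle, `Ad U` is upper triangular with diagonal `Uᵢᵢ / Uⱼⱼ` (`i ≠ j`) and `1, 1`.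
This multiset of eigenvalues is invariant under `U ↦ U⁻¹`.
-/

open Matrix Polynomial

/-- The Lie algebra `𝔰𝔩₃(ℂ)` of traceless `3 × 3` complex matrices, as a subspace. -/
noncomputable def sl3 : Submodule ℂ (Matrix (Fin 3) (Fin 3) ℂ) :=
  LinearMap.ker (Matrix.traceLinearMap (Fin 3) ℂ ℂ)

lemma mem_sl3 {A : Matrix (Fin 3) (Fin 3) ℂ} : A ∈ sl3 ↔ A.trace = 0 := Iff.rfl

lemma trace_mul_mul_inv {n R : Type*} [Fintype n] [DecidableEq n] [CommRing R]
    (M A : Matrix n n R) (hA : A.trace = 0) :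
    (M * A * M⁻¹).trace = 0 := by
  rw [trace_mul_cycle]
  by_cases hM : IsUnit M.det
  · rw [nonsing_inv_mul _ hM, one_mul, hA]
  · rw [nonsing_inv_apply_not_isUnit _ hM, zero_mul, zero_mul, trace_zero]

/-- Defined for every `M`: for singular `M` we have `M⁻¹ = 0` and the map is zero, and
`Matrix.mul_inv_rev` holds unconditionally, so `sl3Conj` is still multiplicative. -/
noncomputable def sl3Conj : Matrix (Fin 3) (Fin 3) ℂ →* Module.End ℂ sl3 where
  toFun M :=
    { toFun A := ⟨M * A * M⁻¹, trace_mul_mul_inv M A A.2⟩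
      map_add' A B := Subtype.ext (by simp [mul_add, add_mul])
      map_smul' c A := Subtype.ext (by simp) }
  map_one' := by ext A; simp
  map_mul' M N := by ext A; simp [Matrix.mul_inv_rev, mul_assoc]

@[simp] lemma sl3Conj_apply_coe (M : Matrix (Fin 3) (Fin 3) ℂ) (A : sl3) :
    (sl3Conj M A : Matrix (Fin 3) (Fin 3) ℂ) = M * A * M⁻¹ := rfl

lemma charpoly_sl3Conj_conj (P M : Matrix (Fin 3) (Fin 3) ℂ) (hP : IsUnit P.det) :
    (sl3Conj (P * M * P⁻¹)).charpoly = (sl3Conj M).charpoly := by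
  let e : sl3 ≃ₗ[ℂ] sl3 := LinearEquiv.ofLinearMap (sl3Conj P) (sl3Conj P⁻¹)
    (by rw [← Module.End.mul_eq_comp, ← map_mul, mul_nonsing_inv _ hP, map_one]; rfl)
    (by rw [← Module.End.mul_eq_comp, ← map_mul, nonsing_inv_mul _ hP, map_one]; rfl)
  rw [← e.charpoly_conj (sl3Conj M)]
  congr 1
  ext A
  simp [e, LinearEquiv.conj_apply, mul_assoc]

/-- Coordinates w.r.t. `E₀₂, E₀₁, E₁₂, E₀₀ - E₁₁, E₁₁ - E₂₂, E₁₀, E₂₁, E₂₀`, ordered so that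
conjugation by an upper triangular matrix is upper triangular in them. -/
def sl3Coords (A : Matrix (Fin 3) (Fin 3) ℂ) : Fin 8 → ℂ :=
  ![A 0 2, A 0 1, A 1 2, A 0 0, -A 2 2, A 1 0, A 2 1, A 2 0]

def sl3OfCoords (v : Fin 8 → ℂ) : Matrix (Fin 3) (Fin 3) ℂ :=
  !![v 3, v 1, v 0; v 5, v 4 - v 3, v 2; v 7, v 6, -v 4]

noncomputable def sl3Basis : Module.Basis (Fin 8) ℂ sl3 :=
  .ofEquivFun
    { toFun A := sl3Coords A
      invFun v := ⟨sl3OfCoords v, by simp [mem_sl3, sl3OfCoords, trace_fin_three]⟩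
      map_add' A B := by ext k; fin_cases k <;> simp [sl3Coords, add_comm]
      map_smul' c A := by ext k; fin_cases k <;> simp [sl3Coords]
      left_inv A := by
        have h : (A : Matrix (Fin 3) (Fin 3) ℂ).trace = 0 := A.2
        rw [trace_fin_three] at h
        ext i j
        fin_cases i <;> fin_cases j <;> simp [sl3Coords, sl3OfCoords]
        linear_combination -h
      right_inv v := by ext k; fin_cases k <;> simp [sl3Coords, sl3OfCoords] }

lemma sl3Basis_repr (A : sl3) : sl3Basis.repr A = sl3Coords A := rfl

lemma sl3Basis_apply (j : Fin 8) :
    (sl3Basis j : Matrix (Fin 3) (Fin 3) ℂ) = sl3OfCoords (Pi.single j 1) := by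
  simp [sl3Basis, Module.Basis.coe_ofEquivFun]

lemma isUpperTriangular_inv {n K : Type*} [Fintype n] [DecidableEq n] [LinearOrder n] [Field K]
    {U : Matrix n n K} (hU : U.IsUpperTriangular) : U⁻¹.IsUpperTriangular := by
  by_cases h : IsUnit U.det
  · have := invertibleOfIsUnitDet U h
    exact blockTriangular_inv_of_blockTriangular hU
  · rw [nonsing_inv_apply_not_isUnit _ h]
    exact blockTriangular_zero

lemma inv_apply_self_of_isUpperTriangular {n K : Type*} [Fintype n] [DecidableEq n] [LinearOrder n]
    [Field K] {U : Matrix n n K} (hU : U.IsUpperTriangular) (hdet : IsUnit U.det) (i : n) :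
    U⁻¹ i i = (U i i)⁻¹ := by
  have h := congr_fun₂ (mul_nonsing_inv U hdet) i i
  rw [mul_apply, Finset.sum_eq_single i, one_apply_eq] at h
  · exact eq_inv_of_mul_eq_one_right h
  · intro k _ hki
    rcases hki.lt_or_gt with hk | hk
    · rw [hU hk, zero_mul]
    · rw [isUpperTriangular_inv hU hk, mul_zero]
  · simp

noncomputable def sl3ConjCharpoly (a b c : ℂ) : ℂ[X] :=
  (X - 1) ^ 2 * (X - C (a / b)) * (X - C (b / a)) * (X - C (b / c)) * (X - C (c / b))
    * (X - C (a / c)) * (X - C (c / a))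

lemma sl3ConjCharpoly_inv (a b c : ℂ) : sl3ConjCharpoly a⁻¹ b⁻¹ c⁻¹ = sl3ConjCharpoly a b c := by
  simp only [sl3ConjCharpoly, inv_div_inv]
  ring

lemma toMatrix_sl3Conj_apply (M : Matrix (Fin 3) (Fin 3) ℂ) (i j : Fin 8) :
    LinearMap.toMatrix sl3Basis sl3Basis (sl3Conj M) i j =
      sl3Coords (M * sl3OfCoords (Pi.single j 1) * M⁻¹) i := by
  rw [LinearMap.toMatrix_apply, sl3Basis_repr, sl3Conj_apply_coe, sl3Basis_apply]

theorem charpoly_sl3Conj_of_isUpperTriangular {U : Matrix (Fin 3) (Fin 3) ℂ}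
    (hU : U.IsUpperTriangular) (hdet : IsUnit U.det) :
    (sl3Conj U).charpoly = sl3ConjCharpoly (U 0 0) (U 1 1) (U 2 2) := by
  have hUii : ∀ i, U i i ≠ 0 := by
    rw [det_of_isUpperTriangular hU, isUnit_iff_ne_zero, Finset.prod_ne_zero_iff] at hdet
    exact fun i => hdet i (Finset.mem_univ i)
  have hS := isUpperTriangular_inv hU
  have hSii := inv_apply_self_of_isUpperTriangular hU hdet
  have h10 : U 1 0 = 0 := hU (by decide)
  have h20 : U 2 0 = 0 := hU (by decide)
  have h21 : U 2 1 = 0 := hU (by decide)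
  have h10' : U⁻¹ 1 0 = 0 := hS (by decide)
  have h20' : U⁻¹ 2 0 = 0 := hS (by decide)
  have h21' : U⁻¹ 2 1 = 0 := hS (by decide)
  set A := LinearMap.toMatrix sl3Basis sl3Basis (sl3Conj U)
  have hA : ∀ i j, A i j = sl3Coords (U * sl3OfCoords (Pi.single j 1) * U⁻¹) i :=
    toMatrix_sl3Conj_apply U
  have hAU : A.IsUpperTriangular := by
    intro i j hij
    rw [hA]
    fin_cases i <;> fin_cases j <;> first
      | exact absurd hij (by decide)
      | simp [sl3Coords, sl3OfCoords, mul_apply, Fin.sum_univ_three, h10, h20, h21,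
          h10', h20', h21']
  have hAdiag : ∀ i, A i i = ![U 0 0 / U 2 2, U 0 0 / U 1 1, U 1 1 / U 2 2, 1, 1,
      U 1 1 / U 0 0, U 2 2 / U 1 1, U 2 2 / U 0 0] i := by
    intro i
    rw [hA]
    fin_cases i <;> simp [sl3Coords, sl3OfCoords, mul_apply, Fin.sum_univ_three, h10, h20, h21,
      h10', h20', h21', hSii, hUii, div_eq_mul_inv, mul_comm]
  rw [← LinearMap.charpoly_toMatrix _ sl3Basis, charpoly_of_isUpperTriangular _ hAU,
    Fin.prod_univ_eight]
  simp only [hAdiag, Fin.isValue, cons_val, map_one, sl3ConjCharpoly]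
  ring

theorem charpoly_sl3Conj_inv_of_isUpperTriangular {U : Matrix (Fin 3) (Fin 3) ℂ}
    (hU : U.IsUpperTriangular) (hdet : IsUnit U.det) :
    (sl3Conj U⁻¹).charpoly = sl3ConjCharpoly (U 0 0) (U 1 1) (U 2 2) := by
  have hUii := inv_apply_self_of_isUpperTriangular hU hdet
  rw [charpoly_sl3Conj_of_isUpperTriangular (isUpperTriangular_inv hU)
      (isUnit_nonsing_inv_det U hdet), hUii, hUii, hUii, sl3ConjCharpoly_inv]

lemma conj_nonsing_inv {n K : Type*} [Fintype n] [DecidableEq n] [Field K] (P M : Matrix n n K)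
    (hP : IsUnit P.det) : (P * M * P⁻¹)⁻¹ = P * M⁻¹ * P⁻¹ := by
  rw [Matrix.mul_inv_rev, Matrix.mul_inv_rev, nonsing_inv_nonsing_inv P hP, mul_assoc]

lemma burau_σ₃_mul_σ₁_inv_eq_conj {α : ℂ} (hα : α ≠ 0) :
    !![1, 0, 0; 0, 1, 0; 0, α, -α] * !![-α, 1, 0; 0, 1, 0; 0, 0, 1]⁻¹ =
      !![1, 0, 0; 0, 0, 1; 0, 1, 0] * !![-α⁻¹, 0, α⁻¹; 0, -α, α; 0, 0, 1] *
        !![(1 : ℂ), 0, 0; 0, 0, 1; 0, 1, 0]⁻¹ := by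
  have hb1 : !![-α, 1, 0; 0, 1, 0; 0, 0, 1]⁻¹ = !![-α⁻¹, α⁻¹, 0; 0, 1, 0; 0, 0, 1] := by
    refine inv_eq_right_inv ?_
    ext i j; fin_cases i <;> fin_cases j <;> simp [mul_apply, Fin.sum_univ_three, hα]
  have hP : !![(1 : ℂ), 0, 0; 0, 0, 1; 0, 1, 0]⁻¹ = !![1, 0, 0; 0, 0, 1; 0, 1, 0] := by
    refine inv_eq_right_inv ?_
    ext i j; fin_cases i <;> fin_cases j <;> simp [mul_apply, Fin.sum_univ_three]
  rw [hb1, hP]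
  ext i j; fin_cases i <;> fin_cases j <;> simp [mul_apply, Fin.sum_univ_three]

lemma sl3ConjCharpoly_neg_inv_neg_one (α : ℂ) :
    sl3ConjCharpoly (-α⁻¹) (-α) 1 =
      (X - 1) ^ 2 * (X - C (α⁻¹ ^ 2)) * (X - C (α ^ 2)) * (X + C α) ^ 2 * (X + C α⁻¹) ^ 2 := by
  simp only [sl3ConjCharpoly, div_eq_mul_inv, inv_neg, inv_inv, inv_one, mul_neg,
    mul_one, one_mul, map_neg, map_mul, map_pow]
  ring

/-- With `β₄` the reduced Burau representation of `B₄` evaluated at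
`t = α`, the conjugation action on `𝔰𝔩₃(ℂ)` of each of
`X(α) = ρ₄(α)(σ₃σ₁⁻¹)`, `X(α)⁻¹`, `Y(α) = ρ₄(α)(σ₂σ₃σ₁⁻¹σ₂⁻¹)`, `Y(α)⁻¹`
has characteristic polynomial `(t-1)²(t-1/α²)(t-α²)(t+α)²(t+1/α)²`. -/
theorem charpoly_conjugation_burau4
    (α : ℂ) (hα : α ≠ 0)
    (b1 b2 b3 : Matrix (Fin 3) (Fin 3) ℂ)
    (hb1 : b1 = !![-α, 1, 0; 0, 1, 0; 0, 0, 1])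
    (hb2 : b2 = !![1, 0, 0; α, -α, 1; 0, 0, 1])
    (hb3 : b3 = !![1, 0, 0; 0, 1, 0; 0, α, -α])
    (X Y : Matrix (Fin 3) (Fin 3) ℂ)
    (hX : X = b3 * b1⁻¹)
    (hY : Y = b2 * b3 * b1⁻¹ * b2⁻¹)
    (M : Matrix (Fin 3) (Fin 3) ℂ)
    (hM : M = X ∨ M = X⁻¹ ∨ M = Y ∨ M = Y⁻¹)
    (f : Module.End ℂ sl3)
    (hf : ∀ v : sl3, ((f v : Matrix (Fin 3) (Fin 3) ℂ)) = M * (v : Matrix (Fin 3) (Fin 3) ℂ) * M⁻¹) :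
    f.charpoly =
      (Polynomial.X - 1) ^ 2 * (Polynomial.X - Polynomial.C (α⁻¹ ^ 2))
        * (Polynomial.X - Polynomial.C (α ^ 2))
        * (Polynomial.X + Polynomial.C α) ^ 2
        * (Polynomial.X + Polynomial.C α⁻¹) ^ 2 := by
  obtain rfl : f = sl3Conj M := LinearMap.ext fun v => Subtype.ext (hf v)
  let P : Matrix (Fin 3) (Fin 3) ℂ := !![1, 0, 0; 0, 0, 1; 0, 1, 0]
  let U : Matrix (Fin 3) (Fin 3) ℂ := !![-α⁻¹, 0, α⁻¹; 0, -α, α; 0, 0, 1]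
  have hU : U.IsUpperTriangular := by
    intro i j hij; fin_cases i <;> fin_cases j <;> first | exact absurd hij (by decide) | rfl
  have hUdet : IsUnit U.det := by simp [U, det_fin_three, hα]
  have hPdet : IsUnit P.det := by simp [P, det_fin_three]
  have hb2det : IsUnit b2.det := by simp [hb2, det_fin_three, hα]
  have hXU : X = P * U * P⁻¹ := by rw [hX, hb1, hb3, burau_σ₃_mul_σ₁_inv_eq_conj hα]
  have hYX : Y = b2 * X * b2⁻¹ := by rw [hY, hX, mul_assoc b2]
  have hX₁ : (sl3Conj X).charpoly = sl3ConjCharpoly (-α⁻¹) (-α) 1 := by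
    rw [hXU, charpoly_sl3Conj_conj _ _ hPdet]
    exact charpoly_sl3Conj_of_isUpperTriangular hU hUdet
  have hX₂ : (sl3Conj X⁻¹).charpoly = sl3ConjCharpoly (-α⁻¹) (-α) 1 := by
    rw [hXU, conj_nonsing_inv _ _ hPdet, charpoly_sl3Conj_conj _ _ hPdet]
    exact charpoly_sl3Conj_inv_of_isUpperTriangular hU hUdet
  rw [← sl3ConjCharpoly_neg_inv_neg_one]
  rcases hM with rfl | rfl | rfl | rfl
  · exact hX₁
  · exact hX₂
  · rw [hYX, charpoly_sl3Conj_conj _ _ hb2det, hX₁]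
  · rw [hYX, conj_nonsing_inv _ _ hb2det, charpoly_sl3Conj_conj _ _ hb2det, hX₂]
end

section
/- Let σ ∈ GL₃(ℂ) be given (in some basis) by the matrix S₁ = [[-a, 2, 1],[0,1,1],[0,0,-1/a]] and τ by S₂ = [[-1/a,0,0],[-1,1,0],[1,-2,-a]] for a nonzero complex number a. Then S₁S₂S₁ = S₂S₁S₂, i.e., these matrices define a representation of the braid group B₃ sending σ₁ ↦ S₁ and σ₂ ↦ S₂; moreover the eigenvalues of S₁ (and of S₂) are -a, 1, -1/a. -/
open Matrix Polynomial

/-! The braid relation is an entrywise identity of polynomials in `a` and `b = a⁻¹` that holds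
modulo `a * b = 1`. `S₁` is upper and `S₂` lower triangular, so both characteristic
polynomials are read off the diagonal `-a, 1, -a⁻¹`. -/

lemma Matrix.charpoly_of_isLowerTriangular {n R : Type*} [Fintype n] [DecidableEq n]
    [LinearOrder n] [CommRing R] (M : Matrix n n R) (h : M.IsLowerTriangular) :
    M.charpoly = ∏ i : n, (X - C (M i i)) := by
  rw [← charpoly_transpose]
  exact charpoly_of_isUpperTriangular _ h.transpose

namespace TubaWenzl

variable {R : Type*} [CommRing R]

/-- With `b = a⁻¹` these are the images of `σ₁` and `σ₂` under `ρ₃(a)`. -/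
def S₁ (a b : R) : Matrix (Fin 3) (Fin 3) R := !![-a, 2, 1; 0, 1, 1; 0, 0, -b]

def S₂ (a b : R) : Matrix (Fin 3) (Fin 3) R := !![-b, 0, 0; -1, 1, 0; 1, -2, -a]

theorem braid_relation {a b : R} (hab : a * b = 1) :
    S₁ a b * S₂ a b * S₁ a b = S₂ a b * S₁ a b * S₂ a b := by
  ext i j
  fin_cases i <;> fin_cases j <;>
    simp [S₁, S₂, mul_apply, Fin.sum_univ_succ] <;> grind

theorem isUpperTriangular_S₁ (a b : R) : (S₁ a b).IsUpperTriangular := by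
  intro i j hij
  fin_cases i <;> fin_cases j <;> simp_all [S₁]

theorem isLowerTriangular_S₂ (a b : R) : (S₂ a b).IsLowerTriangular := by
  intro i j hij
  rw [OrderDual.toDual_lt_toDual] at hij
  fin_cases i <;> fin_cases j <;> simp_all [S₂]

theorem charpoly_S₁ (a b : R) :
    (S₁ a b).charpoly = (X + C a) * (X - 1) * (X + C b) := by
  rw [charpoly_of_isUpperTriangular _ (isUpperTriangular_S₁ a b), Fin.prod_univ_three]
  simp [S₁]

theorem charpoly_S₂ (a b : R) :
    (S₂ a b).charpoly = (X + C a) * (X - 1) * (X + C b) := by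
  rw [charpoly_of_isLowerTriangular _ (isLowerTriangular_S₂ a b), Fin.prod_univ_three]
  simp [S₂]
  ring

end TubaWenzl

open TubaWenzl in
/-- The matrices `S₁ = [[-a,2,1],[0,1,1],[0,0,-1/a]]` and
`S₂ = [[-1/a,0,0],[-1,1,0],[1,-2,-a]]` satisfy the braid relation
`S₁S₂S₁ = S₂S₁S₂` (so they define a representation of `B₃`), and each has
eigenvalues `-a, 1, -1/a`: the characteristic polynomial of each is
`(X + a)(X - 1)(X + 1/a)`. -/
theorem tuba_wenzl_braid_relation
    (a : ℂ) (ha : a ≠ 0)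
    (S₁ S₂ : Matrix (Fin 3) (Fin 3) ℂ)
    (hS₁ : S₁ = !![-a, 2, 1; 0, 1, 1; 0, 0, -a⁻¹])
    (hS₂ : S₂ = !![-a⁻¹, 0, 0; -1, 1, 0; 1, -2, -a]) :
    S₁ * S₂ * S₁ = S₂ * S₁ * S₂ ∧
    S₁.charpoly = (X + Polynomial.C a) * (X - 1) * (X + Polynomial.C a⁻¹) ∧
    S₂.charpoly = (X + Polynomial.C a) * (X - 1) * (X + Polynomial.C a⁻¹) := by
  subst hS₁ hS₂
  exact ⟨braid_relation (mul_inv_cancel₀ ha), charpoly_S₁ a a⁻¹, charpoly_S₂ a a⁻¹⟩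
end
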